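/- For n ≥ 2, the cylinder [.w_n] is disjoint from T^N([.w_n]) for all 1 ≤ N < 2^{n-1}. -/
import Mathlib


inductive A : Type
  | a | b | c | d
deriving DecidableEq

def subst : A → List A
  | A.a => [A.a, A.c, A.a]
  | A.b => [A.d]
  | A.c => [A.b]
  | A.d => [A.c]

def substW (u : List A) : List A := u.flatMap subst

def wrd (n : ℕ) : List A := substW^[n - 1] [A.a]

def ltr (n : ℕ) : List A := substW^[n - 1] [A.c]

def seg (ξ : ℕ → A) (s m : ℕ) : List A := (List.range m).map fun i => ξ (s + 1 + i)

def IsFixed (ξ : ℕ → A) : Prop :=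
  ∀ N : ℕ, seg ξ 0 ((substW (seg ξ 0 N)).length) = substW (seg ξ 0 N)

/-- The phase space of the subshift: bi-infinite sequences all of whose finite
factors occur in the fixed point `ξ`. -/
def Omega (ξ : ℕ → A) : Set (ℤ → A) :=
  {ω | ∀ (s : ℤ) (m : ℕ), ∃ t : ℕ,
    seg ξ t m = (List.range m).map fun i => ω (s + 1 + (i : ℤ))}

/-- The `N`-th power of the shift map `T`. -/
def shiftN (N : ℤ) (ω : ℤ → A) : ℤ → A := fun i => ω (i + N)

/-- The cylinder `[u.v]` inside `Omega ξ`. -/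
def cyl (ξ : ℕ → A) (u v : List A) : Set (ℤ → A) :=
  {ω | ω ∈ Omega ξ ∧
    (List.range u.length).map (fun i => ω (1 + (i : ℤ) - u.length)) = u ∧
    (List.range v.length).map (fun i => ω (1 + (i : ℤ))) = v}

/-- The cylinder `[.v]` with empty past word. -/
def cylF (ξ : ℕ → A) (v : List A) : Set (ℤ → A) := cyl ξ [] v

def F : A → A
  | A.a => A.c
  | A.b => A.d
  | A.c => A.b
  | A.d => A.c

def g (p : ℕ) : A :=
  if p % 2 = 0 then A.a else F (g (p / 2))
decreasing_by omega

lemma F_ne (x : A) : F x ≠ x := by cases x <;> simp [F]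

lemma F_ne_a (x : A) : F x ≠ A.a := by cases x <;> simp [F]

lemma subst_eq (x : A) (h : x ≠ A.a) : subst x = [F x] := by
  cases x <;> simp [subst, F] at h ⊢

lemma g_even (p : ℕ) (h : p % 2 = 0) : g p = A.a := by rw [g]; simp [h]

lemma g_odd (p : ℕ) (h : p % 2 = 1) : g p = F (g (p / 2)) := by rw [g]; simp [h]

def v2 (n : ℕ) : ℕ :=
  if n % 2 = 0 ∧ n ≠ 0 then v2 (n / 2) + 1 else 0
decreasing_by omega

lemma v2_odd (n : ℕ) (h : n % 2 = 1) : v2 n = 0 := by rw [v2]; simp [h]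

lemma v2_even (n : ℕ) (h : n % 2 = 0) (h0 : n ≠ 0) : v2 n = v2 (n / 2) + 1 := by
  rw [v2]; simp [h, h0]

lemma g_eq (p : ℕ) : g p = F^[v2 (p + 1)] A.a := by
  induction p using Nat.strong_induction_on with
  | _ p ih =>
    rcases Nat.even_or_odd p with hp | hp
    · have hp' := Nat.even_iff.mp hp
      rw [g_even p hp', v2_odd (p + 1) (by omega)]; rfl
    · have hp' := Nat.odd_iff.mp hp
      rw [g_odd p hp', v2_even (p + 1) (by omega) (by omega)]
      have h2 : (p + 1) / 2 = p / 2 + 1 := by omega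
      rw [h2, Function.iterate_succ_apply', ih (p / 2) (by omega)]

lemma v2_mul_pow (t q : ℕ) (hq : q % 2 = 1) : v2 (2 ^ t * q) = t := by
  induction t with
  | zero => simpa using v2_odd q hq
  | succ t ih =>
    have h0 : 2 ^ t * q ≠ 0 := Nat.mul_ne_zero (by positivity) (by omega)
    have h : 2 ^ (t + 1) * q = 2 * (2 ^ t * q) := by ring
    rw [h, v2_even _ (by omega) (by omega), Nat.mul_div_cancel_left _ (by norm_num), ih]

lemma v2_spec (n : ℕ) (hn : n ≠ 0) : ∃ q, q % 2 = 1 ∧ n = 2 ^ (v2 n) * q := by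
  induction n using Nat.strong_induction_on with
  | _ n ih =>
    rcases Nat.even_or_odd n with hp | hp
    · have hp' := Nat.even_iff.mp hp
      obtain ⟨q, hq, hq2⟩ := ih (n / 2) (by omega) (by omega)
      exact ⟨q, hq, by rw [v2_even n hp' hn, pow_succ', Nat.mul_assoc]; omega⟩
    · exact ⟨n, Nat.odd_iff.mp hp, by rw [v2_odd n (Nat.odd_iff.mp hp)]; ring⟩

lemma substW_map_g (m : ℕ) :
    substW ((List.range (2 * m + 1)).map g) = (List.range (2 * (2 * m + 1) + 1)).map g := by
  induction m with
  | zero =>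
    have h0 : g 0 = A.a := g_even 0 rfl
    have h1 : g 1 = A.c := by rw [g_odd 1 rfl]; show F (g 0) = _; rw [h0]; rfl
    have h2 : g 2 = A.a := g_even 2 rfl
    show substW [g 0] = [g 0, g 1, g 2]
    rw [h0, h1, h2]; rfl
  | succ m ih =>
    have hsub : ∀ u v : List A, substW (u ++ v) = substW u ++ substW v := by
      intro u v; simp [substW]
    have hr1 : List.range (2 * (m + 1) + 1) = List.range (2 * m + 1) ++ [2 * m + 1, 2 * m + 2] := by
      rw [show 2 * (m + 1) + 1 = (2 * m + 1) + 2 by ring, List.range_add]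
      simp [List.range_succ]
    have hr2 : List.range (2 * (2 * (m + 1) + 1) + 1) =
        List.range (2 * (2 * m + 1) + 1) ++
          [2 * (2 * m + 1) + 1, 2 * (2 * m + 1) + 2, 2 * (2 * m + 1) + 3, 2 * (2 * m + 1) + 4] := by
      rw [show 2 * (2 * (m + 1) + 1) + 1 = (2 * (2 * m + 1) + 1) + 4 by ring, List.range_add]
      simp [List.range_succ]
    rw [hr1, hr2, List.map_append, List.map_append, hsub, ih]
    have hodd : g (2 * m + 1) = F (g m) := by
      rw [g_odd (2 * m + 1) (by omega), show (2 * m + 1) / 2 = m by omega]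
    have ha : g (2 * m + 2) = A.a := g_even _ (by omega)
    have hs : subst (g (2 * m + 1)) = [F (g (2 * m + 1))] :=
      subst_eq _ (by rw [hodd]; exact F_ne_a _)
    have e1 : g (2 * (2 * m + 1) + 1) = F (g (2 * m + 1)) := by
      rw [g_odd (2 * (2 * m + 1) + 1) (by omega), show (2 * (2 * m + 1) + 1) / 2 = 2 * m + 1 by omega]
    have e2 : g (2 * (2 * m + 1) + 2) = A.a := g_even _ (by omega)
    have e3 : g (2 * (2 * m + 1) + 3) = A.c := by
      rw [g_odd (2 * (2 * m + 1) + 3) (by omega), show (2 * (2 * m + 1) + 3) / 2 = 2 * m + 2 by omega, ha]; rfl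
    have e4 : g (2 * (2 * m + 1) + 4) = A.a := g_even _ (by omega)
    simp only [List.map_cons, List.map_nil]
    rw [e1, e2, e3, e4, show substW [g (2 * m + 1), g (2 * m + 2)] =
      subst (g (2 * m + 1)) ++ subst (g (2 * m + 2)) by simp [substW]]
    rw [hs, ha]
    rfl

lemma wrd_eq (n : ℕ) (hn : 1 ≤ n) : wrd n = (List.range (2 ^ n - 1)).map g := by
  induction n with
  | zero => omega
  | succ n ih =>
    rcases Nat.eq_or_lt_of_le hn with h | h
    · simp only [← h]
      show [A.a] = List.map g (List.range (2 ^ 1 - 1))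
      rw [show (2:ℕ) ^ 1 - 1 = 1 from rfl, show List.range 1 = [0] by simp [List.range_succ], List.map_singleton, g_even 0 rfl]
    · have hn1 : 1 ≤ n := by omega
      have : wrd (n + 1) = substW (wrd n) := by
        show substW^[n + 1 - 1] [A.a] = substW (substW^[n - 1] [A.a])
        rw [show n + 1 - 1 = (n - 1) + 1 by omega, Function.iterate_succ_apply']
      rw [this, ih hn1]
      have hm : 2 ^ n - 1 = 2 * (2 ^ (n - 1) - 1) + 1 := by
        have : 2 ^ n = 2 * 2 ^ (n - 1) := by
          rw [← pow_succ']; congr 1; omega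
        have h2 : 1 ≤ 2 ^ (n-1) := Nat.one_le_two_pow
        omega
      have hm2 : 2 ^ (n + 1) - 1 = 2 * (2 ^ n - 1) + 1 := by
        have : 2 ^ (n+1) = 2 * 2 ^ n := by rw [← pow_succ']
        have h2 : 1 ≤ 2 ^ n := Nat.one_le_two_pow
        omega
      rw [hm, substW_map_g, hm2, ← hm]

lemma no_period (n N : ℕ) (hn : 2 ≤ n) (hN1 : 1 ≤ N) (hN2 : N < 2 ^ (n - 1)) :
    ∃ i, i + N < 2 ^ n - 1 ∧ g i ≠ g (i + N) := by
  obtain ⟨q, hq, hNq⟩ := v2_spec N (by omega)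
  set t := v2 N with ht
  refine ⟨2 ^ (t + 1) - 1, ?_, ?_⟩
  · have h1 : 2 ^ t ≤ N := by
      calc 2 ^ t ≤ 2 ^ t * q := Nat.le_mul_of_pos_right _ (by omega)
      _ = N := hNq.symm
    have h2 : t < n - 1 := by
      by_contra h
      have : 2 ^ (n-1) ≤ 2 ^ t := Nat.pow_le_pow_right (by norm_num) (by omega)
      omega
    have h3 : 2 ^ (t + 1) ≤ 2 ^ (n - 1) := Nat.pow_le_pow_right (by norm_num) (by omega)
    have h4 : 2 ^ (n - 1) + 2 ^ (n - 1) = 2 ^ n := by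
      rw [← two_mul, ← pow_succ']; congr 1; omega
    omega
  · have hp1 : 1 ≤ 2 ^ (t + 1) := Nat.one_le_two_pow
    have e1 : g (2 ^ (t + 1) - 1) = F^[t + 1] A.a := by
      rw [g_eq, show 2 ^ (t+1) - 1 + 1 = 2 ^ (t+1) * 1 by omega, v2_mul_pow _ 1 rfl]
    have e2 : g (2 ^ (t + 1) - 1 + N) = F^[t] A.a := by
      rw [g_eq, show 2 ^ (t+1) - 1 + N + 1 = 2 ^ t * (q + 2) by
        rw [hNq]; have : 2 ^ (t+1) = 2 * 2 ^ t := by rw [← pow_succ']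
        have h2 : 1 ≤ 2 ^ t := Nat.one_le_two_pow
        have h5 : 2 ^ t * (q + 2) = 2 ^ t * q + 2 * 2 ^ t := by ring
        omega, v2_mul_pow _ (q + 2) (by omega)]
    rw [e1, e2, Function.iterate_succ_apply']
    exact F_ne _

theorem stmt12 (ξ : ℕ → A) (hξ : IsFixed ξ) :
    ∀ n : ℕ, 2 ≤ n → ∀ N : ℕ, 1 ≤ N → N < 2 ^ (n - 1) →
      Disjoint (cylF ξ (wrd n)) (shiftN (N : ℤ) '' cylF ξ (wrd n)) := by
  intro n hn N hN1 hN2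
  have hwrd := wrd_eq n (by omega)
  have hL : (wrd n).length = 2 ^ n - 1 := by rw [hwrd]; simp
  rw [Set.disjoint_left]
  rintro x ⟨-, -, hx⟩ ⟨ω, ⟨-, -, hω⟩, rfl⟩
  rw [hL, hwrd] at hx hω
  have hcast : ∀ l : List ℕ, (do let a ← l; pure ((a : ℤ))) = l.map (fun a : ℕ => (a : ℤ)) := by
    intro l
    induction l with
    | nil => rfl
    | cons a l ih => simp_all
  rw [hcast, List.map_map, List.map_inj_left] at hx hω
  obtain ⟨i, hiN, hne⟩ := no_period n N hn hN1 hN2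
  have h1 : ω (1 + ((i + N : ℕ) : ℤ)) = g (i + N) :=
    hω (i + N) (List.mem_range.mpr hiN)
  have h2 : shiftN (N : ℤ) ω (1 + (i : ℤ)) = g i :=
    hx i (List.mem_range.mpr (by omega))
  apply hne
  rw [← h2, ← h1]
  show ω (1 + (i : ℤ) + N) = _
  congr 1
  push_cast
  ring
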